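/- arXiv:1603.05768 — 4 statements merged into one kernel-verified Lean document; each statement's English description precedes it below -/
import Mathlib

section
/- Let (I,·) be a Cartan datum (a set I with a symmetric bilinear form on ℤI such that i·i is a positive even integer for all i and 2(i·j)/(i·i) is a nonpositive integer for distinct i,j). Let a be an automorphism of (I,·) such that i·j = 0 whenever i and j lie in the same a-orbit. Let J be the set of a-orbits in I, and embed ℤJ into ℤI by sending an orbit j to the sum of its elements. Then the restriction of the bilinear form to ℤJ makes (J,·) a Cartan datum: for each orbit j, j·j is a positive even integer, and for distinct orbits j,j', the quantity 2(j·j')/(j·j) is a nonpositive integer. -/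
/-- Folding a Cartan datum `(I, ·)` by an admissible diagram automorphism `a`
(admissible: `i · j = 0` for distinct `i, j` in the same `a`-orbit) yields a
Cartan datum structure on the set `J` of orbits, where an orbit `j` is sent to
the sum of its elements in `ℤI`, so `j · j' = ∑_{i ∈ j} ∑_{i' ∈ j'} i · i'`. -/
theorem stmt_0 (I : Type*) (B : I → I → ℤ)
    (hsymm : ∀ i j, B i j = B j i)
    (hpos : ∀ i, 0 < B i i) (heven : ∀ i, Even (B i i))
    (hoff : ∀ i j, i ≠ j → 2 * B i j ≤ 0 ∧ B i i ∣ 2 * B i j)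
    (a : I ≃ I) (ha : ∀ i j, B (a i) (a j) = B i j)
    (horb : ∀ i j, i ≠ j → (∃ k : ℕ, (⇑a)^[k] i = j) → B i j = 0)
    (o o' : Finset I) (i₀ i₀' : I)
    (ho : ∀ i, i ∈ o ↔ ∃ k : ℕ, (⇑a)^[k] i₀ = i)
    (ho' : ∀ i, i ∈ o' ↔ ∃ k : ℕ, (⇑a)^[k] i₀' = i) :
    (0 < ∑ i ∈ o, ∑ i' ∈ o, B i i') ∧ Even (∑ i ∈ o, ∑ i' ∈ o, B i i') ∧
    (o ≠ o' →
      2 * (∑ i ∈ o, ∑ i' ∈ o', B i i') ≤ 0 ∧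
      (∑ i ∈ o, ∑ i' ∈ o, B i i') ∣ 2 * (∑ i ∈ o, ∑ i' ∈ o', B i i')) := by
  classical
  have hinj : Function.Injective (⇑a) := a.injective
  -- B is invariant under iterates of a
  have hBiter : ∀ (k : ℕ) (x y : I), B ((⇑a)^[k] x) ((⇑a)^[k] y) = B x y := by
    intro k
    induction k with
    | zero => intro x y; rfl
    | succ n ih =>
      intro x y
      rw [Function.iterate_succ_apply', Function.iterate_succ_apply', ha, ih]
  -- from any element of an orbit one can iterate back to the base point
  have hback : ∀ (s : Finset I) (z : I),
      (∀ i, i ∈ s ↔ ∃ k : ℕ, (⇑a)^[k] z = i) → ∀ i ∈ s, ∃ k : ℕ, (⇑a)^[k] i = z := by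
    intro s z hs i hi
    obtain ⟨m, hm⟩ := (hs i).1 hi
    have hmapsto : ∀ k ∈ Finset.range (s.card + 1), (⇑a)^[k] z ∈ s :=
      fun k _ => (hs _).2 ⟨k, rfl⟩
    obtain ⟨k, hk, l, hl, hne, heq⟩ :=
      Finset.exists_ne_map_eq_of_card_lt_of_maps_to (by simp) hmapsto
    have hper : ∃ N, 0 < N ∧ (⇑a)^[N] z = z := by
      have key : ∀ k l : ℕ, k < l → (⇑a)^[k] z = (⇑a)^[l] z → ∃ N, 0 < N ∧ (⇑a)^[N] z = z := by
        intro k l hkl he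
        refine ⟨l - k, by omega, ?_⟩
        have h2 : (⇑a)^[k] ((⇑a)^[l - k] z) = (⇑a)^[k] z := by
          rw [← Function.iterate_add_apply, show k + (l - k) = l by omega]
          exact he.symm
        exact (hinj.iterate k) h2
      rcases hne.lt_or_gt with h | h
      · exact key k l h heq
      · exact key l k h heq.symm
    obtain ⟨N, hN, hNz⟩ := hper
    have hmul : ∀ q : ℕ, (⇑a)^[N * q] z = z := by
      intro q
      induction q with
      | zero => simp
      | succ n ih =>
        rw [Nat.mul_succ, Function.iterate_add_apply, hNz, ih]
    refine ⟨N * m - m, ?_⟩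
    rw [← hm, ← Function.iterate_add_apply,
      show N * m - m + m = N * m by have := Nat.le_mul_of_pos_left m hN; omega]
    exact hmul m
  -- orbits are connected: from any element to any other
  have hconn : ∀ (s : Finset I) (z : I),
      (∀ i, i ∈ s ↔ ∃ k : ℕ, (⇑a)^[k] z = i) →
      ∀ i ∈ s, ∀ j ∈ s, ∃ k : ℕ, (⇑a)^[k] i = j := by
    intro s z hs i hi j hj
    obtain ⟨p, hp⟩ := hback s z hs i hi
    obtain ⟨q, hq⟩ := (hs j).1 hj
    exact ⟨q + p, by rw [Function.iterate_add_apply, hp, hq]⟩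
  have hi₀ : i₀ ∈ o := (ho i₀).2 ⟨0, rfl⟩
  -- a maps each orbit into itself, hence its image is the orbit
  have himage : ∀ (s : Finset I) (z : I),
      (∀ i, i ∈ s ↔ ∃ k : ℕ, (⇑a)^[k] z = i) → s.image a = s := by
    intro s z hs
    apply Finset.eq_of_subset_of_card_le
    · intro x hx
      obtain ⟨y, hy, rfl⟩ := Finset.mem_image.1 hx
      obtain ⟨k, hk⟩ := (hs y).1 hy
      exact (hs _).2 ⟨k + 1, by rw [Function.iterate_succ_apply', hk]⟩
    · rw [Finset.card_image_of_injective _ hinj]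
  -- value of the diagonal block
  have hdiag : ∑ i ∈ o, ∑ i' ∈ o, B i i' = (o.card : ℤ) * B i₀ i₀ := by
    have h1 : ∀ i ∈ o, ∑ i' ∈ o, B i i' = B i₀ i₀ := by
      intro i hi
      rw [Finset.sum_eq_single i]
      · obtain ⟨k, hk⟩ := (ho i).1 hi
        rw [← hk, hBiter]
      · intro b hb hbi
        exact horb i b (Ne.symm hbi) (hconn o i₀ ho i hi b hb)
      · intro h; exact absurd hi h
    rw [Finset.sum_congr rfl h1, Finset.sum_const, nsmul_eq_mul]
  have hcardpos : 0 < o.card := Finset.card_pos.2 ⟨i₀, hi₀⟩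
  refine ⟨?_, ?_, ?_⟩
  · rw [hdiag]
    exact mul_pos (by exact_mod_cast hcardpos) (hpos i₀)
  · rw [hdiag]
    exact (heven i₀).mul_left _
  · intro hone
    -- distinct orbits are disjoint
    have hdisj : ∀ i ∈ o, ∀ i' ∈ o', i ≠ i' := by
      intro i hi i' hi' hii
      subst hii
      apply hone
      have hsub : ∀ (s t : Finset I) (z w : I),
          (∀ x, x ∈ s ↔ ∃ k : ℕ, (⇑a)^[k] z = x) →
          (∀ x, x ∈ t ↔ ∃ k : ℕ, (⇑a)^[k] w = x) →
          i ∈ s → i ∈ t → s ⊆ t := by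
        intro s t z w hs ht his hit x hx
        obtain ⟨k, hk⟩ := hconn s z hs i his x hx
        obtain ⟨q, hq⟩ := (ht i).1 hit
        exact (ht x).2 ⟨k + q, by rw [Function.iterate_add_apply, hq, hk]⟩
      exact Finset.Subset.antisymm (hsub o o' i₀ i₀' ho ho' hi hi')
        (hsub o' o i₀' i₀ ho' ho hi' hi)
    -- row sums over o' are constant along o
    have hstep : ∀ x : I, ∑ i' ∈ o', B (a x) i' = ∑ i' ∈ o', B x i' := by
      intro x
      conv_lhs => rw [← himage o' i₀' ho']
      rw [Finset.sum_image (fun y _ z _ h => hinj h)]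
      exact Finset.sum_congr rfl fun i' _ => ha x i'
    have hrow : ∀ i ∈ o, ∑ i' ∈ o', B i i' = ∑ i' ∈ o', B i₀ i' := by
      intro i hi
      obtain ⟨m, hm⟩ := (ho i).1 hi
      rw [← hm]
      clear hm hi
      induction m with
      | zero => rfl
      | succ n ih => rw [Function.iterate_succ_apply', hstep, ih]
    have htot : ∑ i ∈ o, ∑ i' ∈ o', B i i' = (o.card : ℤ) * ∑ i' ∈ o', B i₀ i' := by
      rw [Finset.sum_congr rfl hrow, Finset.sum_const, nsmul_eq_mul]
    constructor
    · rw [htot, show (2 : ℤ) * ((o.card : ℤ) * ∑ i' ∈ o', B i₀ i') =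
        (o.card : ℤ) * ∑ i' ∈ o', 2 * B i₀ i' by simp only [Finset.mul_sum]; exact Finset.sum_congr rfl fun x _ => by ring]
      apply mul_nonpos_of_nonneg_of_nonpos
      · positivity
      · exact Finset.sum_nonpos fun i' hi' => (hoff i₀ i' (hdisj i₀ hi₀ i' hi')).1
    · rw [hdiag, htot, show (2 : ℤ) * ((o.card : ℤ) * ∑ i' ∈ o', B i₀ i') =
        (o.card : ℤ) * ∑ i' ∈ o', 2 * B i₀ i' by simp only [Finset.mul_sum]; exact Finset.sum_congr rfl fun x _ => by ring]
      exact mul_dvd_mul_left _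
        (Finset.dvd_sum fun i' hi' => (hoff i₀ i' (hdisj i₀ hi₀ i' hi')).2)
end

section
/- Let k be an algebraically closed field, A a k-algebra, a an algebra automorphism of A with aⁿ = id for a positive integer n not divisible by the characteristic of k. Let L be a finite-dimensional simple A-module and let t be the minimal positive integer with (a*)ᵗL ≅ L, where a*M denotes the module with action twisted by a. Then there exists an isomorphism σ : a*(L ⊕ a*L ⊕ ⋯ ⊕ (a*)^{t-1}L) → L ⊕ a*L ⊕ ⋯ ⊕ (a*)^{t-1}L such that σ ∘ a*σ ∘ ⋯ ∘ (a*)^{n-1}σ = id. -/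
/-!
If `g : (a*)ᵗL ≅ L`, then `gᵐ : (a*)^{tm}L ≅ L`; writing `n = tq + r` and using `aⁿ = 1`, the
inverse of `g^q` is an isomorphism `(a*)ʳL ≅ L`, so minimality of `t` forces `t ∣ n`. For
`n = tq` the map `g^q` commutes with the action, so it is a nonzero scalar by Schur's lemma, and
rescaling `g` by a `q`-th root of the inverse scalar achieves `g^q = 1`. The isomorphism `σ` is
the cyclic shift of the `t` summands that applies `g` to the summand wrapping around; `σᵗ`
applies `g` to every summand, hence `σⁿ = 1`.
-/

section Twisted

variable {k A L : Type*} [CommSemiring k] [Semiring A] [Algebra k A] [AddCommMonoid L]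
  [Module k L]

/-- `g` is an `A`-module isomorphism `b*L ≅ L`, where `b*L` is `L` with `x` acting by `ρ (b x)`. -/
def IsTwistedEquiv (ρ : A →ₐ[k] Module.End k L) (b : A ≃ₐ[k] A) (g : L ≃ₗ[k] L) : Prop :=
  ∀ (x : A) (v : L), g (ρ (b x) v) = ρ x (g v)

namespace IsTwistedEquiv

variable {ρ : A →ₐ[k] Module.End k L} {b c : A ≃ₐ[k] A} {f g : L ≃ₗ[k] L}

theorem mul (hf : IsTwistedEquiv ρ b f) (hg : IsTwistedEquiv ρ c g) :
    IsTwistedEquiv ρ (b * c) (g * f) := fun x v => by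
  rw [AlgEquiv.mul_apply, LinearEquiv.mul_apply, hf, hg, LinearEquiv.mul_apply]

theorem pow (hg : IsTwistedEquiv ρ b g) : ∀ m : ℕ, IsTwistedEquiv ρ (b ^ m) (g ^ m)
  | 0 => fun x v => rfl
  | m + 1 => by rw [pow_succ, pow_succ']; exact (hg.pow m).mul hg

theorem inv (hg : IsTwistedEquiv ρ b g) : IsTwistedEquiv ρ b⁻¹ g⁻¹ := fun x v => by
  have h := hg (b⁻¹ x) (g⁻¹ v)
  rw [AlgEquiv.aut_inv, AlgEquiv.apply_symm_apply, LinearEquiv.coe_inv,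
    LinearEquiv.apply_symm_apply] at h
  rw [AlgEquiv.aut_inv, LinearEquiv.coe_inv, LinearEquiv.symm_apply_eq, h]

theorem _root_.isTwistedEquiv_one_iff :
    IsTwistedEquiv ρ 1 g ↔ ∀ x, Commute (g : Module.End k L) (ρ x) := by
  simp only [IsTwistedEquiv, AlgEquiv.one_apply, commute_iff_eq, LinearMap.ext_iff,
    Module.End.mul_apply, LinearEquiv.coe_coe]

theorem toModuleAut_mul (hg : IsTwistedEquiv ρ b g) (u : kˣ) :
    IsTwistedEquiv ρ b (DistribMulAction.toModuleAut k L u * g) := by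
  have hu : IsTwistedEquiv ρ 1 (DistribMulAction.toModuleAut k L u) := fun x v => by simp
  simpa using hg.mul hu

theorem dvd_of_forall_lt {a : A ≃ₐ[k] A} {n t : ℕ} (hg : IsTwistedEquiv ρ (a ^ t) g)
    (han : a ^ n = 1) (ht : 0 < t)
    (hmin : ∀ s : ℕ, 0 < s → s < t → ¬ ∃ g, IsTwistedEquiv ρ (a ^ s) g) : t ∣ n := by
  by_contra hdvd
  refine hmin (n % t) (Nat.pos_of_ne_zero (mt Nat.dvd_of_mod_eq_zero hdvd)) (Nat.mod_lt n ht)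
    ⟨(g ^ (n / t))⁻¹, ?_⟩
  have ha : a ^ (n % t) = ((a ^ t) ^ (n / t))⁻¹ := by
    rw [← pow_mul, eq_inv_iff_mul_eq_one, ← pow_add, Nat.mod_add_div, han]
  rw [ha]
  exact (hg.pow _).inv

end IsTwistedEquiv

end Twisted

section Schur

variable {k L ι : Type*} [Field k] [IsAlgClosed k] [AddCommGroup L] [Module k L]
  [FiniteDimensional k L] [Nontrivial L]

theorem Module.End.exists_eq_smul_of_forall_commute (ρ : ι → Module.End k L)
    (hsimple : ∀ U : Submodule k L, (∀ x, ∀ u ∈ U, ρ x u ∈ U) → U = ⊥ ∨ U = ⊤)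
    (f : Module.End k L) (hf : ∀ x, Commute f (ρ x)) : ∃ c : k, ∀ v, f v = c • v := by
  obtain ⟨c, hc⟩ := f.exists_eigenvalue
  have hinv : ∀ x, ∀ u ∈ f.eigenspace c, ρ x u ∈ f.eigenspace c := fun x u hu => by
    rw [Module.End.mem_eigenspace_iff] at hu ⊢
    rw [← Module.End.mul_apply, hf x, Module.End.mul_apply, hu, map_smul]
  have htop : f.eigenspace c = ⊤ := (hsimple _ hinv).resolve_left hc
  exact ⟨c, fun v => Module.End.mem_eigenspace_iff.mp (htop ▸ Submodule.mem_top)⟩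

theorem LinearEquiv.exists_eq_toModuleAut_of_forall_commute (ρ : ι → Module.End k L)
    (hsimple : ∀ U : Submodule k L, (∀ x, ∀ u ∈ U, ρ x u ∈ U) → U = ⊥ ∨ U = ⊤)
    (g : L ≃ₗ[k] L) (hg : ∀ x, Commute (g : Module.End k L) (ρ x)) :
    ∃ u : kˣ, g = DistribMulAction.toModuleAut k L u := by
  obtain ⟨c, hc⟩ := Module.End.exists_eq_smul_of_forall_commute ρ hsimple g hg
  have hc0 : c ≠ 0 := by
    rintro rfl
    obtain ⟨v, hv⟩ := exists_ne (0 : L)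
    exact hv (g.injective (by simpa using hc v))
  exact ⟨Units.mk0 c hc0, LinearEquiv.ext hc⟩

end Schur

section Rescale

variable {k A L : Type*} [Field k] [IsAlgClosed k] [Semiring A] [Algebra k A] [AddCommGroup L]
  [Module k L] [FiniteDimensional k L] [Nontrivial L] {ρ : A →ₐ[k] Module.End k L}

theorem IsTwistedEquiv.exists_pow_eq_one
    (hsimple : ∀ U : Submodule k L, (∀ x : A, ∀ u ∈ U, ρ x u ∈ U) → U = ⊥ ∨ U = ⊤)
    {b : A ≃ₐ[k] A} {g : L ≃ₗ[k] L} {q : ℕ} (hg : IsTwistedEquiv ρ b g) (hb : b ^ q = 1)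
    (hq : 0 < q) : ∃ g' : L ≃ₗ[k] L, IsTwistedEquiv ρ b g' ∧ g' ^ q = 1 := by
  have hcomm : IsTwistedEquiv ρ 1 (g ^ q) := hb ▸ hg.pow q
  obtain ⟨u, hu⟩ := (g ^ q).exists_eq_toModuleAut_of_forall_commute ρ hsimple
    (isTwistedEquiv_one_iff.mp hcomm)
  obtain ⟨d, hd⟩ := IsAlgClosed.exists_pow_nat_eq ((u⁻¹ : kˣ) : k) hq
  have hd0 : d ≠ 0 := by
    rintro rfl
    exact (u⁻¹).ne_zero (by rw [← hd, zero_pow hq.ne'])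
  set s := DistribMulAction.toModuleAut k L (Units.mk0 d hd0)
  have hsg : Commute s g := LinearEquiv.ext fun v => by simp [s]
  refine ⟨s * g, hg.toModuleAut_mul _, ?_⟩
  rw [hsg.mul_pow, hu, ← map_pow, ← map_mul]
  have hdu : Units.mk0 d hd0 ^ q * u = 1 := Units.ext <| by simp [hd]
  rw [hdu, map_one]

end Rescale

theorem LinearEquiv.piCongrRight_pow {R ι : Type*} {φ : ι → Type*} [Semiring R]
    [∀ i, AddCommMonoid (φ i)] [∀ i, Module R (φ i)] (e : ∀ i, φ i ≃ₗ[R] φ i) (q : ℕ) :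
    LinearEquiv.piCongrRight e ^ q = LinearEquiv.piCongrRight fun i => e i ^ q := by
  induction q with
  | zero => rfl
  | succ q ih =>
    rw [pow_succ, ih]
    rfl

section CycleShift

open Fin.NatCast

variable {R L : Type*} [Semiring R] [AddCommMonoid L] [Module R L] {t : ℕ} [NeZero t]

theorem Fin.val_zero_sub_one : ((0 - 1 : Fin t) : ℕ) = t - 1 := by
  obtain ⟨s, rfl⟩ := Nat.exists_eq_add_one_of_ne_zero (NeZero.ne t)
  rw [zero_sub, Fin.coe_neg_one, Nat.add_sub_cancel]

def cycleShift (g : L ≃ₗ[R] L) : (Fin t → L) ≃ₗ[R] (Fin t → L) :=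
  (LinearEquiv.funCongrLeft R L (Equiv.subRight 1)).trans
    (LinearEquiv.piCongrRight fun i => if i = 0 then g else 1)

variable (g : L ≃ₗ[R] L)

theorem cycleShift_apply (v : Fin t → L) (i : Fin t) :
    cycleShift g v i = if i = 0 then g (v (i - 1)) else v (i - 1) := by
  by_cases hi : i = 0 <;> simp [cycleShift, hi, LinearMap.funLeft_apply]

theorem cycleShift_pow_apply {m : ℕ} (hm : m ≤ t) (v : Fin t → L) (i : Fin t) :
    (cycleShift g ^ m) v i = if (i : ℕ) < m then g (v (i - m)) else v (i - m) := by
  induction m generalizing i with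
  | zero => simp
  | succ m ih =>
    have hsub : i - 1 - (m : Fin t) = i - ((m + 1 : ℕ) : Fin t) := by
      rw [sub_sub, Nat.cast_succ, add_comm]
    rw [pow_succ', LinearEquiv.mul_apply, cycleShift_apply, ih (by omega), hsub]
    by_cases hi : i = 0
    · subst hi
      have hlast : ¬ ((0 - 1 : Fin t) : ℕ) < m := by
        rw [Fin.val_zero_sub_one]
        omega
      simp only [hlast, if_true, if_false, Fin.val_zero, Nat.zero_lt_succ]
    · have hlt : ((i - 1 : Fin t) : ℕ) < m ↔ (i : ℕ) < m + 1 := by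
        rw [Fin.val_sub_one_of_ne_zero hi]
        have := Fin.pos_iff_ne_zero.mpr hi
        omega
      simp only [hi, hlt, if_false]

theorem cycleShift_pow_card :
    cycleShift (t := t) g ^ t = LinearEquiv.piCongrRight fun _ => g := by
  ext v i
  rw [cycleShift_pow_apply g le_rfl, if_pos i.isLt, Fin.natCast_self, sub_zero]
  rfl

end CycleShift

theorem IsTwistedEquiv.cycleShift_intertwines {k A L : Type*} [CommSemiring k] [Semiring A]
    [Algebra k A] [AddCommMonoid L] [Module k L] {ρ : A →ₐ[k] Module.End k L} {a : A ≃ₐ[k] A}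
    {t : ℕ} [NeZero t] {g : L ≃ₗ[k] L} (hg : IsTwistedEquiv ρ (a ^ t) g) (x : A)
    (v : Fin t → L) :
    cycleShift g (fun i : Fin t => ρ ((a ^ ((i : ℕ) + 1)) x) (v i)) =
      fun i : Fin t => ρ ((a ^ (i : ℕ)) x) (cycleShift g v i) := by
  funext i
  rw [cycleShift_apply, cycleShift_apply]
  by_cases hi : i = 0
  · subst hi
    simp only [if_true, Fin.val_zero_sub_one, Nat.sub_add_cancel (NeZero.one_le : 1 ≤ t),
      Fin.val_zero, pow_zero, AlgEquiv.one_apply]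
    exact hg x _
  · have hi' : 1 ≤ (i : ℕ) := Nat.one_le_iff_ne_zero.mpr (Fin.val_ne_zero_iff.mpr hi)
    simp only [hi, if_false, Fin.val_sub_one_of_ne_zero hi, Nat.sub_add_cancel hi']

theorem stmt_1_general (k : Type*) [Field k] [IsAlgClosed k]
    (A : Type*) [Ring A] [Algebra k A]
    (a : A ≃ₐ[k] A) (n : ℕ) (hn : 0 < n) (han : a ^ n = 1)
    (L : Type*) [AddCommGroup L] [Module k L] [FiniteDimensional k L] [Nontrivial L]
    (ρ : A →ₐ[k] Module.End k L)
    (hsimple : ∀ U : Submodule k L, (∀ x : A, ∀ u ∈ U, ρ x u ∈ U) → U = ⊥ ∨ U = ⊤)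
    (t : ℕ) (ht : 0 < t)
    (hiso : ∃ g : L ≃ₗ[k] L, ∀ (x : A) (v : L), g (ρ ((a ^ t) x) v) = ρ x (g v))
    (hmin : ∀ s : ℕ, 0 < s → s < t →
      ¬ ∃ g : L ≃ₗ[k] L, ∀ (x : A) (v : L), g (ρ ((a ^ s) x) v) = ρ x (g v)) :
    ∃ σ : (Fin t → L) ≃ₗ[k] (Fin t → L),
      (∀ (x : A) (v : Fin t → L),
        σ (fun i : Fin t => ρ ((a ^ ((i : ℕ) + 1)) x) (v i)) =
          fun i : Fin t => ρ ((a ^ (i : ℕ)) x) (σ v i)) ∧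
      σ.toLinearMap ^ n = 1 := by
  obtain ⟨g, hg⟩ := hiso
  obtain ⟨q, rfl⟩ := IsTwistedEquiv.dvd_of_forall_lt hg han ht hmin
  obtain ⟨g', hg', hg'q⟩ := IsTwistedEquiv.exists_pow_eq_one hsimple hg
    (by rwa [← pow_mul]) (Nat.pos_of_mul_pos_left hn)
  have : NeZero t := ⟨ht.ne'⟩
  refine ⟨cycleShift g', hg'.cycleShift_intertwines, ?_⟩
  have hσ : cycleShift (t := t) g' ^ (t * q) = 1 := by
    rw [pow_mul, cycleShift_pow_card, LinearEquiv.piCongrRight_pow, hg'q]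
    rfl
  rw [← LinearEquiv.automorphismGroup.toLinearMapMonoidHom_apply, ← map_pow, hσ, map_one]

/-- Let `k` be an algebraically closed field, `A` a `k`-algebra, `a` an algebra
automorphism of `A` with `aⁿ = 1` where the characteristic of `k` does not divide `n`.
Let `L` be a finite-dimensional simple `A`-module (given via `ρ : A → End_k L`) and `t`
the minimal positive integer with `(a*)ᵗ L ≅ L`.  Then the `A`-module
`M = L ⊕ a*L ⊕ ⋯ ⊕ (a*)^{t-1} L` (realised as `Fin t → L` with `x` acting on the `i`-th
component through `ρ (aⁱ x)`) admits an `A`-module isomorphism `σ : a*M → M` whose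
`n`-fold twisted composite is the identity (as underlying linear maps, `σⁿ = 1`). -/
theorem stmt_1 (k : Type*) [Field k] [IsAlgClosed k]
    (A : Type*) [Ring A] [Algebra k A]
    (a : A ≃ₐ[k] A) (n : ℕ) (hn : 0 < n) (hchar : (n : k) ≠ 0) (han : a ^ n = 1)
    (L : Type*) [AddCommGroup L] [Module k L] [FiniteDimensional k L] [Nontrivial L]
    (ρ : A →ₐ[k] Module.End k L)
    (hsimple : ∀ U : Submodule k L, (∀ x : A, ∀ u ∈ U, ρ x u ∈ U) → U = ⊥ ∨ U = ⊤)
    (t : ℕ) (ht : 0 < t)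
    (hiso : ∃ g : L ≃ₗ[k] L, ∀ (x : A) (v : L), g (ρ ((a ^ t) x) v) = ρ x (g v))
    (hmin : ∀ s : ℕ, 0 < s → s < t →
      ¬ ∃ g : L ≃ₗ[k] L, ∀ (x : A) (v : L), g (ρ ((a ^ s) x) v) = ρ x (g v)) :
    ∃ σ : (Fin t → L) ≃ₗ[k] (Fin t → L),
      (∀ (x : A) (v : Fin t → L),
        σ (fun i : Fin t => ρ ((a ^ ((i : ℕ) + 1)) x) (v i)) =
          fun i : Fin t => ρ ((a ^ (i : ℕ)) x) (σ v i)) ∧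
      σ.toLinearMap ^ n = 1 :=
  stmt_1_general k A a n hn han L ρ hsimple t ht hiso hmin
end

section
/- Let k be an algebraically closed field, A a k-algebra, a an automorphism of A of finite order n with char k not dividing n, and let A#ℤ/n denote the smash product (i.e., the algebra A⋊ℤ/n where the generator of ℤ/n acts on A by a). Then every finite-dimensional simple A#ℤ/n-module, viewed as an A-module, is a direct sum of the form L ⊕ a*L ⊕ ⋯ ⊕ (a*)^{t-1}L, where L is a simple A-module and t is the minimal positive integer with (a*)ᵗL ≅ L. -/
/-!
Let `L` be a simple `A`-submodule of `M` and `t` the least positive integer with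
`(a^t)* L ≅ L`; it divides `n` because `a^n = 1`. For `g : (a^t)* L ≅ L`, the operator
`f ↦ σ^t ∘ f ∘ g⁻¹` on `Hom_A(L, M)` has an eigenvector since `k` is algebraically closed, and
its image is a copy of `L` stable under `σ^t`; replace `L` by it. Then `∑_{i<t} σ^{-i} L` is
stable under `A` and `σ`, hence equals `M`. Its summands `σ^{-i} L ≅ (a^i)* L` are simple and,
by minimality of `t`, pairwise non-isomorphic, so the sum is direct: a simple submodule of
`T ⊕ N` meeting `N` trivially is isomorphic to `T`.
-/

section SmashProductModule

variable {k A M : Type*} [Field k] [Ring A] [Algebra k A] [AddCommGroup M] [Module k M]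
  (ρ : A →ₐ[k] Module.End k M)

def IsStable (U : Submodule k M) : Prop := ∀ x : A, ∀ u ∈ U, ρ x u ∈ U

def IsMinimalStable (L : Submodule k M) : Prop :=
  IsStable ρ L ∧ L ≠ ⊥ ∧ ∀ U ≤ L, IsStable ρ U → U = ⊥ ∨ U = L

/-- `TwistedIso ρ b V W` says that `b* V ≅ W`, where `b* V` is `V` with the action twisted
by `b`. -/
def TwistedIso (b : A ≃ₐ[k] A) (V W : Submodule k M) : Prop :=
  ∃ e : V ≃ₗ[k] W, ∀ (x : A) (v : V) (h : ρ (b x) v ∈ V), (e ⟨ρ (b x) v, h⟩ : M) = ρ x (e v)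

/-- `f` is an `A`-linear map `a* M → M`. -/
def IsTwistedHom (a : A ≃ₐ[k] A) (f : Module.End k M) : Prop :=
  ∀ (x : A) (v : M), f (ρ (a x) v) = ρ x (f v)

def intertwiners (V : Submodule k M) : Submodule k (V →ₗ[k] M) where
  carrier := {f | ∀ (x : A) (v : V) (h : ρ x v ∈ V), f ⟨ρ x v, h⟩ = ρ x (f v)}
  add_mem' hf hg x v h := by simp [hf x v h, hg x v h]
  zero_mem' x v h := by simp
  smul_mem' c f hf x v h := by simp [hf x v h]

variable {ρ}

theorem IsStable.iSup {ι : Sort*} {p : ι → Submodule k M} (hp : ∀ i, IsStable ρ (p i)) :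
    IsStable ρ (⨆ i, p i) := fun x u hu => by
  refine Submodule.iSup_induction p (motive := fun u => ρ x u ∈ ⨆ i, p i) hu
    (fun i u hu => Submodule.mem_iSup_of_mem i (hp i x u hu)) (by simp) fun u v hu hv => ?_
  simpa using add_mem hu hv

theorem IsStable.finset_sup {ι : Type*} {s : Finset ι} {p : ι → Submodule k M}
    (hp : ∀ i ∈ s, IsStable ρ (p i)) : IsStable ρ (s.sup p) := by
  rw [Finset.sup_eq_iSup]
  exact IsStable.iSup fun i => IsStable.iSup fun hi => hp i hi

theorem IsStable.inf {U V : Submodule k M} (hU : IsStable ρ U) (hV : IsStable ρ V) :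
    IsStable ρ (U ⊓ V) := fun x _ hu => ⟨hU x _ hu.1, hV x _ hu.2⟩

theorem isStable_range {V : Submodule k M} (hV : IsStable ρ V) {f : V →ₗ[k] M}
    (hf : f ∈ intertwiners ρ V) : IsStable ρ (LinearMap.range f) := by
  rintro x _ ⟨v, rfl⟩
  exact ⟨⟨ρ x v, hV x v v.2⟩, hf x v _⟩

theorem exists_isMinimalStable_le [FiniteDimensional k M] {W : Submodule k M}
    (hW : IsStable ρ W) (hW0 : W ≠ ⊥) : ∃ L ≤ W, IsMinimalStable ρ L := by
  obtain ⟨L, ⟨hLW, hL, hL0⟩, hmin⟩ := wellFounded_lt.has_min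
    {L : Submodule k M | L ≤ W ∧ IsStable ρ L ∧ L ≠ ⊥} ⟨W, le_rfl, hW, hW0⟩
  refine ⟨L, hLW, hL, hL0, fun U hUL hU => or_iff_not_imp_left.2 fun hU0 => ?_⟩
  exact hUL.eq_of_not_lt (hmin U ⟨hUL.trans hLW, hU, hU0⟩)

theorem IsMinimalStable.le_of_not_disjoint {L N : Submodule k M} (hL : IsMinimalStable ρ L)
    (hN : IsStable ρ N) (h : ¬ Disjoint L N) : L ≤ N := by
  rcases hL.2.2 _ inf_le_left (hL.1.inf hN) with h' | h'
  · exact absurd (disjoint_iff.2 h') h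
  · exact h' ▸ inf_le_right

theorem TwistedIso.refl (V : Submodule k M) : TwistedIso ρ 1 V V :=
  ⟨LinearEquiv.refl k V, fun _ _ _ => rfl⟩

theorem TwistedIso.trans {b c : A ≃ₐ[k] A} {V W X : Submodule k M}
    (h₁ : TwistedIso ρ b V W) (h₂ : TwistedIso ρ c W X) : TwistedIso ρ (b * c) V X := by
  obtain ⟨e₁, he₁⟩ := h₁
  obtain ⟨e₂, he₂⟩ := h₂
  refine ⟨e₁.trans e₂, fun x v h => ?_⟩
  have hW : ρ (c x) (e₁ v) ∈ W := he₁ (c x) v h ▸ (e₁ _).2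
  have : e₁ ⟨ρ ((b * c) x) v, h⟩ = ⟨ρ (c x) (e₁ v), hW⟩ := Subtype.ext (he₁ (c x) v h)
  simp only [LinearEquiv.trans_apply, this, he₂ x (e₁ v) hW]

theorem TwistedIso.symm {b : A ≃ₐ[k] A} {V W : Submodule k M} (hV : IsStable ρ V)
    (h : TwistedIso ρ b V W) : TwistedIso ρ b⁻¹ W V := by
  obtain ⟨e, he⟩ := h
  refine ⟨e.symm, fun x w hw => ?_⟩
  have hx : b (b⁻¹ x) = x := AlgEquiv.apply_symm_apply b x
  have hV' : ρ (b (b⁻¹ x)) (e.symm w) ∈ V := by rw [hx]; exact hV x _ (e.symm w).2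
  have : e ⟨ρ (b (b⁻¹ x)) (e.symm w), hV'⟩ = ⟨ρ (b⁻¹ x) w, hw⟩ :=
    Subtype.ext ((he _ _ hV').trans (by rw [e.apply_symm_apply]))
  rw [← this, e.symm_apply_apply]
  simp only [hx]

theorem TwistedIso.twistedIso_self_iff {b : A ≃ₐ[k] A} {V W : Submodule k M}
    (h : TwistedIso ρ 1 V W) (hV : IsStable ρ V) :
    TwistedIso ρ b W W ↔ TwistedIso ρ b V V :=
  ⟨fun hb => by simpa using (h.trans hb).trans (h.symm hV),
    fun hb => by simpa using ((h.symm hV).trans hb).trans h⟩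

theorem IsMinimalStable.of_twistedIso {b : A ≃ₐ[k] A} {V W : Submodule k M}
    (h : TwistedIso ρ b V W) (hV : IsStable ρ V) (hW : IsMinimalStable ρ W) :
    IsMinimalStable ρ V := by
  obtain ⟨e, he⟩ := h
  have : Nontrivial W := Submodule.nontrivial_iff_ne_bot.2 hW.2.1
  refine ⟨hV, Submodule.nontrivial_iff_ne_bot.1 e.symm.injective.nontrivial,
    fun U hUV hU => ?_⟩
  let U' : Submodule k M := (U.comap V.subtype).map (W.subtype ∘ₗ e.toLinearMap)
  have hU' : IsStable ρ U' := by
    rintro x _ ⟨v, hv, rfl⟩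
    exact ⟨⟨ρ (b x) v, hV _ _ v.2⟩, hU _ _ hv, he x v _⟩
  have hU'W : U' ≤ W := by
    rintro _ ⟨v, -, rfl⟩
    exact (e v).2
  rcases hW.2.2 U' hU'W hU' with hbot | htop
  · refine Or.inl (eq_bot_iff.2 fun u hu => ?_)
    have : (e ⟨u, hUV hu⟩ : M) ∈ U' := ⟨⟨u, hUV hu⟩, hu, rfl⟩
    rw [hbot, Submodule.mem_bot, ZeroMemClass.coe_eq_zero, LinearEquiv.map_eq_zero_iff] at this
    simpa using congrArg Subtype.val this
  · refine Or.inr (le_antisymm hUV fun v hv => ?_)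
    obtain ⟨v', hv', he'⟩ : (e ⟨v, hv⟩ : M) ∈ U' := by rw [htop]; exact (e _).2
    obtain rfl : v' = ⟨v, hv⟩ := e.injective (Subtype.ext he')
    exact hv'

theorem IsMinimalStable.injective_of_mem_intertwiners {L : Submodule k M}
    (hL : IsMinimalStable ρ L) {f : L →ₗ[k] M} (hf : f ∈ intertwiners ρ L) (hf0 : f ≠ 0) :
    Function.Injective f := by
  let K : Submodule k M := (LinearMap.ker f).map L.subtype
  have hK : IsStable ρ K := by
    rintro x _ ⟨v, hv, rfl⟩
    exact ⟨⟨ρ x v, hL.1 x v v.2⟩, by simp_all [hf x v _], rfl⟩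
  rcases hL.2.2 K (Submodule.map_subtype_le _ _) hK with hbot | htop
  · rw [← LinearMap.ker_eq_bot]
    exact Submodule.map_injective_of_injective L.injective_subtype
      (hbot.trans (Submodule.map_bot _).symm)
  · refine absurd (LinearMap.ext fun v => ?_) hf0
    obtain ⟨v', hv', he⟩ : (v : M) ∈ K := by rw [htop]; exact v.2
    obtain rfl : v' = v := Subtype.ext he
    exact hv'

theorem twistedIso_range {V : Submodule k M} {f : V →ₗ[k] M} (hf : f ∈ intertwiners ρ V)
    (hinj : Function.Injective f) : TwistedIso ρ 1 V (LinearMap.range f) :=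
  ⟨LinearEquiv.ofInjective f hinj, fun x v h => by simpa using hf x v h⟩

theorem IsMinimalStable.twistedIso_of_le_sup {S T N : Submodule k M}
    (hS : IsMinimalStable ρ S) (hT : IsMinimalStable ρ T) (hN : IsStable ρ N)
    (hle : S ≤ T ⊔ N) (hSN : Disjoint S N) : TwistedIso ρ 1 S T := by
  have hTN : Disjoint T N := by
    by_contra h
    exact hS.2.1 (hSN.eq_bot_of_le (hle.trans (sup_le (hT.le_of_not_disjoint hN h) le_rfl)))
  let q := N.mkQ ∘ₗ T.subtype
  have hq : Function.Injective q := by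
    rwa [← LinearMap.ker_eq_bot, LinearMap.ker_comp, Submodule.ker_mkQ,
      ← Submodule.disjoint_iff_comap_eq_bot]
  have hSq : ∀ s : S, N.mkQ s ∈ LinearMap.range q := fun s => by
    obtain ⟨y, hy, z, hz, hyz⟩ := Submodule.mem_sup.1 (hle s.2)
    exact ⟨⟨y, hy⟩, (Submodule.Quotient.eq N).2 (by simpa [← hyz] using neg_mem hz)⟩
  -- the projection `S → T` along `N`, computed in `M ⧸ N`
  let p : S →ₗ[k] T :=
    (LinearEquiv.ofInjective q hq).symm.toLinearMap ∘ₗ (N.mkQ ∘ₗ S.subtype).codRestrict _ hSq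
  have hp : ∀ s : S, (p s : M) - s ∈ N := fun s => by
    have := congrArg Subtype.val ((LinearEquiv.ofInjective q hq).apply_symm_apply ⟨_, hSq s⟩)
    exact (Submodule.Quotient.eq N).1 this
  let f : S →ₗ[k] M := T.subtype ∘ₗ p
  have hf : f ∈ intertwiners ρ S := fun x s h => by
    have : p ⟨ρ x s, h⟩ = ⟨ρ x (p s), hT.1 x _ (p s).2⟩ := by
      refine hq ((Submodule.Quotient.eq N).2 ?_)
      convert sub_mem (hp ⟨ρ x s, h⟩) (hN x _ (hp s)) using 1
      rw [map_sub, sub_sub_sub_cancel_right]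
      rfl
    exact congrArg Subtype.val this
  have hinj : Function.Injective f := by
    rw [← LinearMap.ker_eq_bot, Submodule.eq_bot_iff]
    intro s hs
    have hps : (p s : M) = 0 := LinearMap.mem_ker.1 hs
    have hsN : (s : M) ∈ N := by simpa [hps] using hp s
    exact Subtype.ext (Submodule.disjoint_def.1 hSN _ s.2 hsN)
  have hrange : LinearMap.range f = T := by
    rcases hT.2.2 _ (by rintro _ ⟨s, rfl⟩; exact (p s).2) (isStable_range hS.1 hf) with h | h
    · have : Nontrivial S := Submodule.nontrivial_iff_ne_bot.2 hS.2.1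
      exact absurd (LinearMap.range_eq_bot.1 h) (LinearMap.ne_zero_of_injective hinj)
    · exact h
  exact hrange ▸ twistedIso_range hf hinj

theorem IsMinimalStable.disjoint_finset_sup {S : Submodule k M} (hS : IsMinimalStable ρ S)
    {ι : Type*} (s : Finset ι) {T : ι → Submodule k M} (hT : ∀ i ∈ s, IsMinimalStable ρ (T i))
    (hST : ∀ i ∈ s, ¬ TwistedIso ρ 1 S (T i)) : Disjoint S (s.sup T) := by
  classical
  induction s using Finset.induction_on with
  | empty => simp
  | insert g s _ ih =>
    have hsup : IsStable ρ ((insert g s).sup T) := IsStable.finset_sup fun i hi => (hT i hi).1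
    rw [Finset.forall_mem_insert] at hT hST
    rw [Finset.sup_insert] at hsup ⊢
    by_contra h
    exact hST.1 (hS.twistedIso_of_le_sup hT.1 (IsStable.finset_sup fun i hi => (hT.2 i hi).1)
      (hS.le_of_not_disjoint hsup h) (ih hT.2 hST.2))

variable {a : A ≃ₐ[k] A} {σ : M ≃ₗ[k] M}

theorem IsTwistedHom.pow {f : Module.End k M} (hf : IsTwistedHom ρ a f) (i : ℕ) :
    IsTwistedHom ρ (a ^ i) (f ^ i) := by
  induction i with
  | zero => simp [IsTwistedHom]
  | succ i ih =>
    intro x v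
    rw [pow_succ, pow_succ', AlgEquiv.mul_apply, Module.End.mul_apply, hf, ih,
      Module.End.mul_apply]

theorem LinearEquiv.bijective_toLinearMap_pow (σ : M ≃ₗ[k] M) (i : ℕ) :
    Function.Bijective (σ.toLinearMap ^ i) := by
  rw [Module.End.coe_pow]
  exact σ.bijective.iterate i

theorem IsStable.comap {b : A ≃ₐ[k] A} {f : Module.End k M} (hf : IsTwistedHom ρ b f)
    {L : Submodule k M} (hL : IsStable ρ L) : IsStable ρ (L.comap f) := fun x v hv => by
  rw [Submodule.mem_comap, ← b.apply_symm_apply x, hf]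
  exact hL _ _ hv

theorem twistedIso_comap {b : A ≃ₐ[k] A} {f : Module.End k M} (hf : IsTwistedHom ρ b f)
    (hbij : Function.Bijective f) (L : Submodule k M) : TwistedIso ρ b (L.comap f) L :=
  ⟨(Submodule.equivMapOfInjective _ hbij.1 (L.comap f)).trans
    (LinearEquiv.ofEq _ _ (Submodule.map_comap_eq_of_surjective hbij.2 L)),
    fun x v _ => hf x v⟩

theorem twistedIso_comap_pow (hσ : IsTwistedHom ρ a σ.toLinearMap) (L : Submodule k M)
    (i : ℕ) : TwistedIso ρ (a ^ i) (L.comap (σ.toLinearMap ^ i)) L :=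
  twistedIso_comap (hσ.pow i) (σ.bijective_toLinearMap_pow i) L

theorem IsMinimalStable.comap_pow (hσ : IsTwistedHom ρ a σ.toLinearMap)
    {L : Submodule k M} (hL : IsMinimalStable ρ L) (i : ℕ) :
    IsMinimalStable ρ (L.comap (σ.toLinearMap ^ i)) :=
  IsMinimalStable.of_twistedIso (twistedIso_comap_pow hσ L i) (hL.1.comap (hσ.pow i)) hL

theorem twistedIso_pow_sub (hσ : IsTwistedHom ρ a σ.toLinearMap) {L : Submodule k M}
    (hL : IsStable ρ L) {i j : ℕ} (hij : i ≤ j)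
    (h : TwistedIso ρ 1 (L.comap (σ.toLinearMap ^ i)) (L.comap (σ.toLinearMap ^ j))) :
    TwistedIso ρ (a ^ (j - i)) L L := by
  have := (((twistedIso_comap_pow hσ L i).symm (hL.comap (hσ.pow i))).trans h).trans
    (twistedIso_comap_pow hσ L j)
  have hpow : (a ^ i)⁻¹ * a ^ j = a ^ (j - i) := by
    rw [inv_mul_eq_iff_eq_mul, ← pow_add, Nat.add_sub_cancel' hij]
  rwa [mul_one, hpow] at this

theorem dvd_of_twistedIso_pow {L : Submodule k M} (hL : IsStable ρ L) {t : ℕ} (ht : 0 < t)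
    (hLt : TwistedIso ρ (a ^ t) L L) (hmin : ∀ s, 0 < s → s < t → ¬ TwistedIso ρ (a ^ s) L L)
    {s : ℕ} (hs : TwistedIso ρ (a ^ s) L L) : t ∣ s := by
  have hmul : ∀ q, TwistedIso ρ (a ^ (t * q)) L L := by
    intro q
    induction q with
    | zero => simpa using TwistedIso.refl L
    | succ q ih => simpa [mul_add, pow_add] using ih.trans hLt
  have hpow : (a ^ (t * (s / t)))⁻¹ * a ^ s = a ^ (s % t) := by
    rw [inv_mul_eq_iff_eq_mul, ← pow_add, Nat.div_add_mod]
  have hmod := ((hmul (s / t)).symm hL).trans hs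
  rw [hpow] at hmod
  by_contra h
  exact hmin _ (Nat.pos_of_ne_zero (mt Nat.dvd_of_mod_eq_zero h)) (Nat.mod_lt s ht) hmod

theorem iSup_comap_pow_eq_top (hσ : IsTwistedHom ρ a σ.toLinearMap)
    (hsimple : ∀ V : Submodule k M, IsStable ρ V → (∀ v ∈ V, σ v ∈ V) → V = ⊥ ∨ V = ⊤)
    {U : Submodule k M} (hU : IsMinimalStable ρ U) {t : ℕ} (ht : 0 < t)
    (hσU : ∀ u ∈ U, (σ.toLinearMap ^ t) u ∈ U) :
    ⨆ i : Fin t, U.comap (σ.toLinearMap ^ (i : ℕ)) = ⊤ := by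
  set V := ⨆ i : Fin t, U.comap (σ.toLinearMap ^ (i : ℕ))
  have hle : ∀ j < t, U.comap (σ.toLinearMap ^ j) ≤ V := fun j hj =>
    le_iSup (fun i : Fin t => U.comap (σ.toLinearMap ^ (i : ℕ))) ⟨j, hj⟩
  have hsucc : ∀ j, U.comap (σ.toLinearMap ^ (j + 1)) =
      (U.comap (σ.toLinearMap ^ j)).comap σ.toLinearMap := fun j => by
    rw [pow_succ, Module.End.mul_eq_comp, Submodule.comap_comp]
  have hV : V ≤ V.comap σ.toLinearMap := by
    refine iSup_le fun ⟨i, hi⟩ => ?_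
    obtain _ | i := i
    · calc U.comap (σ.toLinearMap ^ 0) = U := by
            rw [pow_zero, Module.End.one_eq_id, Submodule.comap_id]
        _ ≤ U.comap (σ.toLinearMap ^ t) := hσU
        _ = (U.comap (σ.toLinearMap ^ (t - 1))).comap σ.toLinearMap := by
          rw [← hsucc, Nat.sub_add_cancel ht]
        _ ≤ V.comap σ.toLinearMap := Submodule.comap_mono (hle _ (by omega))
    · rw [hsucc]
      exact Submodule.comap_mono (hle i (by omega))
  rcases hsimple V (IsStable.iSup fun i => hU.1.comap (hσ.pow i)) (fun v hv => hV hv) with h | h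
  · have h0 := hle 0 ht
    rw [pow_zero, Module.End.one_eq_id, Submodule.comap_id, h, le_bot_iff] at h0
    exact absurd h0 hU.2.1
  · exact h

theorem iSupIndep_comap_pow (hσ : IsTwistedHom ρ a σ.toLinearMap) {U : Submodule k M}
    (hU : IsMinimalStable ρ U) {t : ℕ} (hmin : ∀ s, 0 < s → s < t → ¬ TwistedIso ρ (a ^ s) U U) :
    iSupIndep fun i : Fin t => U.comap (σ.toLinearMap ^ (i : ℕ)) := by
  rw [iSupIndep_iff_supIndep]
  intro s s' _ j _ hj
  refine (hU.comap_pow hσ j).disjoint_finset_sup s' (fun i _ => hU.comap_pow hσ i)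
    fun i hi h => ?_
  have hij : (i : ℕ) ≠ j := fun h' => hj (Fin.ext h' ▸ hi)
  rcases lt_or_gt_of_ne hij with hlt | hlt
  · have h' := h.symm (hU.1.comap (hσ.pow j))
    rw [inv_one] at h'
    exact hmin _ (by omega) (by omega) (twistedIso_pow_sub hσ hU.1 hlt.le h')
  · exact hmin _ (by omega) (by omega) (twistedIso_pow_sub hσ hU.1 hlt.le h)

theorem IsMinimalStable.exists_copy_stable_pow [IsAlgClosed k] [FiniteDimensional k M]
    (hσ : IsTwistedHom ρ a σ.toLinearMap) {L : Submodule k M} (hL : IsMinimalStable ρ L)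
    {t : ℕ} (hLt : TwistedIso ρ (a ^ t) L L) :
    ∃ U, IsMinimalStable ρ U ∧ TwistedIso ρ 1 L U ∧ ∀ u ∈ U, (σ.toLinearMap ^ t) u ∈ U := by
  obtain ⟨g, hg⟩ := hLt
  let τ : Module.End k (L →ₗ[k] M) :=
    LinearMap.llcomp k L M M (σ.toLinearMap ^ t) ∘ₗ LinearMap.lcomp k M g.symm.toLinearMap
  have hτ : ∀ f ∈ intertwiners ρ L, τ f ∈ intertwiners ρ L := fun f hf x v h => by
    have hgx : g.symm ⟨ρ x v, h⟩ = ⟨ρ ((a ^ t) x) (g.symm v), hL.1 _ _ (g.symm v).2⟩ :=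
      g.symm_apply_eq.2 (Subtype.ext (by rw [hg, g.apply_symm_apply]))
    simp only [τ, LinearMap.comp_apply, LinearMap.llcomp_apply, LinearMap.lcomp_apply,
      LinearEquiv.coe_coe, hgx, hf _ _ _]
    exact hσ.pow t x _
  have : Nontrivial (intertwiners ρ L) := by
    have : Nontrivial L := Submodule.nontrivial_iff_ne_bot.2 hL.2.1
    refine nontrivial_of_ne ⟨L.subtype, fun _ _ _ => rfl⟩ 0 fun h => ?_
    exact LinearMap.ne_zero_of_injective L.injective_subtype (congrArg Subtype.val h)
  obtain ⟨μ, hμ⟩ := Module.End.exists_eigenvalue (τ.restrict hτ)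
  obtain ⟨⟨f, hf⟩, hfμ⟩ := hμ.exists_hasEigenvector
  have hf0 : f ≠ 0 := fun h => hfμ.2 (Subtype.ext h)
  have hLU := twistedIso_range hf (hL.injective_of_mem_intertwiners hf hf0)
  refine ⟨LinearMap.range f,
    IsMinimalStable.of_twistedIso (hLU.symm hL.1) (isStable_range hL.1 hf) hL, hLU, ?_⟩
  rintro _ ⟨v, rfl⟩
  have := LinearMap.congr_fun (congrArg Subtype.val hfμ.apply_eq_smul) (g v)
  exact ⟨μ • g v, by simpa [τ] using this.symm⟩

end SmashProductModule

theorem stmt_2_general (k : Type*) [Field k] [IsAlgClosed k]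
    (A : Type*) [Ring A] [Algebra k A]
    (a : A ≃ₐ[k] A) (n : ℕ) (hn : 0 < n) (han : a ^ n = 1)
    (M : Type*) [AddCommGroup M] [Module k M] [FiniteDimensional k M] [Nontrivial M]
    (ρM : A →ₐ[k] Module.End k M)
    (σ : M ≃ₗ[k] M)
    (hσA : ∀ (x : A) (v : M), σ (ρM (a x) v) = ρM x (σ v))
    (hsimple : ∀ U : Submodule k M, (∀ x : A, ∀ u ∈ U, ρM x u ∈ U) →
      (∀ u ∈ U, σ u ∈ U) → U = ⊥ ∨ U = ⊤) :
    ∃ t : ℕ, 0 < t ∧ t ∣ n ∧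
    ∃ L : Submodule k M, ∃ hL : (∀ x : A, ∀ u ∈ L, ρM x u ∈ L),
      L ≠ ⊥ ∧
      (∀ U : Submodule k M, U ≤ L → (∀ x : A, ∀ u ∈ U, ρM x u ∈ U) → U = ⊥ ∨ U = L) ∧
      DirectSum.IsInternal
        (fun i : Fin t => Submodule.comap (σ.toLinearMap ^ (i : ℕ)) L) ∧
      (∃ g : L ≃ₗ[k] L, ∀ (x : A) (u : L),
        (g ⟨ρM ((a ^ t) x) u, hL _ _ u.2⟩ : M) = ρM x (g u)) ∧
      (∀ s : ℕ, 0 < s →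
        (∃ g : L ≃ₗ[k] L, ∀ (x : A) (u : L),
          (g ⟨ρM ((a ^ s) x) u, hL _ _ u.2⟩ : M) = ρM x (g u)) → t ≤ s) := by
  classical
  obtain ⟨L, -, hL⟩ :=
    exists_isMinimalStable_le (ρ := ρM) (W := ⊤) (fun _ _ _ => trivial) top_ne_bot
  have hLn : TwistedIso ρM (a ^ n) L L := han ▸ TwistedIso.refl L
  have hP : ∃ s, 0 < s ∧ TwistedIso ρM (a ^ s) L L := ⟨n, hn, hLn⟩
  obtain ⟨ht, hLt⟩ := Nat.find_spec hP
  have hmin : ∀ s, 0 < s → s < Nat.find hP → ¬ TwistedIso ρM (a ^ s) L L :=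
    fun s hs hst h => Nat.find_min hP hst ⟨hs, h⟩
  obtain ⟨U, hU, hLU, hσU⟩ := hL.exists_copy_stable_pow hσA hLt
  have hUL (s : ℕ) := hLU.twistedIso_self_iff (b := a ^ s) hL.1
  refine ⟨Nat.find hP, ht, dvd_of_twistedIso_pow hL.1 ht hLt hmin hLn,
    U, hU.1, hU.2.1, hU.2.2, ?_, ?_, ?_⟩
  · exact (DirectSum.isInternal_submodule_iff_iSupIndep_and_iSup_eq_top _).2
      ⟨iSupIndep_comap_pow hσA hU fun s hs hst h => hmin s hs hst ((hUL s).1 h),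
        iSup_comap_pow_eq_top hσA hsimple hU ht hσU⟩
  · obtain ⟨g, hg⟩ := (hUL _).2 hLt
    exact ⟨g, fun x u => hg x u _⟩
  · rintro s hs ⟨g, hg⟩
    exact Nat.find_min' hP ⟨hs, (hUL s).1 ⟨g, fun x u _ => hg x u⟩⟩

/-- Let `k` be an algebraically closed field, `A` a `k`-algebra, `a` an automorphism of
`A` of finite order `n` with `char k ∤ n`.  A module over the smash product `A # ℤ/n` is
the same as a pair `(M, σ)` of an `A`-module `M` (given by `ρM : A → End_k M`) and an
`A`-module isomorphism `σ : a*M → M` with `σⁿ = 1`; it is simple iff `M` has no nonzero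
proper `A`-submodule stable under `σ`.  Every finite-dimensional simple such module,
viewed as an `A`-module, is a direct sum `L ⊕ a*L ⊕ ⋯ ⊕ (a*)^{t-1} L` where `L` is a
simple `A`-submodule, the summand `(a*)^i L` is realised inside `M` as `σ^{-i} L`, and
`t` is the minimal positive integer with `(a*)ᵗ L ≅ L`. -/
theorem stmt_2 (k : Type*) [Field k] [IsAlgClosed k]
    (A : Type*) [Ring A] [Algebra k A]
    (a : A ≃ₐ[k] A) (n : ℕ) (hn : 0 < n) (hchar : (n : k) ≠ 0) (han : a ^ n = 1)
    (M : Type*) [AddCommGroup M] [Module k M] [FiniteDimensional k M] [Nontrivial M]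
    (ρM : A →ₐ[k] Module.End k M)
    (σ : M ≃ₗ[k] M)
    (hσA : ∀ (x : A) (v : M), σ (ρM (a x) v) = ρM x (σ v))
    (hσn : σ.toLinearMap ^ n = 1)
    (hsimple : ∀ U : Submodule k M, (∀ x : A, ∀ u ∈ U, ρM x u ∈ U) →
      (∀ u ∈ U, σ u ∈ U) → U = ⊥ ∨ U = ⊤) :
    ∃ t : ℕ, 0 < t ∧ t ∣ n ∧
    ∃ L : Submodule k M, ∃ hL : (∀ x : A, ∀ u ∈ L, ρM x u ∈ L),
      L ≠ ⊥ ∧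
      (∀ U : Submodule k M, U ≤ L → (∀ x : A, ∀ u ∈ U, ρM x u ∈ U) → U = ⊥ ∨ U = L) ∧
      DirectSum.IsInternal
        (fun i : Fin t => Submodule.comap (σ.toLinearMap ^ (i : ℕ)) L) ∧
      (∃ g : L ≃ₗ[k] L, ∀ (x : A) (u : L),
        (g ⟨ρM ((a ^ t) x) u, hL _ _ u.2⟩ : M) = ρM x (g u)) ∧
      (∀ s : ℕ, 0 < s →
        (∃ g : L ≃ₗ[k] L, ∀ (x : A) (u : L),
          (g ⟨ρM ((a ^ s) x) u, hL _ _ u.2⟩ : M) = ρM x (g u)) → t ≤ s) :=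
  stmt_2_general k A a n hn han M ρM σ hσA hsimple
end

section
/- Let 'f be the free ℚ(q)-algebra on θ_j (j ∈ J), with the twisted coproduct r as above, and define the bilinear form ⟨·,·⟩ on 'f by ⟨1,1⟩ = 1, ⟨θ_i, θ_j⟩ = δ_{ij}(1 - q^{i·i})⁻¹, ⟨x, yz⟩ = ⟨r(x), y ⊗ z⟩ (with ⟨x₁⊗x₂, y₁⊗y₂⟩ = ⟨x₁,y₁⟩⟨x₂,y₂⟩), and orthogonality of distinct weight spaces. Then this form is symmetric: ⟨x,y⟩ = ⟨y,x⟩ for all x, y ∈ 'f. -/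
/-!
Write `ⱼr(x)` for the component of `r(x)` whose left tensor factor is `θ_j` and
`κ_j = ⟨θ_j, θ_j⟩`. The coproduct rule gives `⟨x, θ_j y⟩ = κ_j ⟨ⱼr(x), y⟩`, and
multiplicativity of `r` gives the derivation rule `ⱼr(θ_i y) = δ_{ij} y + q^{i·j} θ_i ⱼr(y)`
(the component of `r(y)` with left factor `1` is `y` itself). For words `v`, `u` of length `n`,
expanding with both rules and then, by symmetry at `u`, once more on `⟨u, θ_i ⱼr(v)⟩` gives
`⟨θ_i v, θ_j u⟩ = κ_j δ_{ij} ⟨v, u⟩ + κ_i κ_j q^{i·j} ⟨ᵢr(u), ⱼr(v)⟩`.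
Since `ⱼr` does not increase word length, induction on length makes the right side symmetric
under `(i, v) ↔ (j, u)`; words of different lengths have different degrees and are orthogonal.
-/

/-- The degree (in `ℕJ`) of a word in the free monoid on `J`. -/
noncomputable def dg {J : Type*} (w : FreeMonoid J) : J →₀ ℕ :=
  (FreeMonoid.toList w |>.map fun j => Finsupp.single j 1).sum

/-- The pairing `ℕJ × ℕJ → ℤ` induced by a symmetric bilinear form `Bf` on `ℤJ`. -/
def pairdeg {J : Type*} (Bf : J → J → ℤ) (μ ν : J →₀ ℕ) : ℤ :=
  μ.sum fun i m => ν.sum fun j m' => (m : ℤ) * (m' : ℤ) * Bf i j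

/-- The twisted multiplication on `'f ⊗ 'f`, modelled on finitely supported functions on
pairs of words: `(x₁ ⊗ y₁)(x₂ ⊗ y₂) = q^{deg y₁ · deg x₂} x₁x₂ ⊗ y₁y₂`. -/
noncomputable def tmulD {J : Type*} (Bf : J → J → ℤ)
    (d₁ d₂ : (FreeMonoid J × FreeMonoid J) →₀ RatFunc ℚ) :
    (FreeMonoid J × FreeMonoid J) →₀ RatFunc ℚ :=
  d₁.sum fun p₁ c₁ => d₂.sum fun p₂ c₂ =>
    Finsupp.single (p₁.1 * p₂.1, p₁.2 * p₂.2)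
      (c₁ * c₂ * (RatFunc.X : RatFunc ℚ) ^ (pairdeg Bf (dg p₁.2) (dg p₂.1)))

open FreeMonoid

section Slice

variable {K M : Type*} [Semiring K]

/-- `slice (of j) (r x)` is Lusztig's `ⱼr(x)`. -/
noncomputable def slice (a : M) : ((M × M) →₀ K) →ₗ[K] MonoidAlgebra K M :=
  (MonoidAlgebra.coeffLinearEquiv K).symm.toLinearMap ∘ₗ Finsupp.lapply a ∘ₗ
    (Finsupp.curryLinearEquiv K).toLinearMap

open Classical in
lemma slice_single (a : M) (p : M × M) (c : K) :
    slice a (Finsupp.single p c) = if p.1 = a then MonoidAlgebra.single p.2 c else 0 := by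
  split_ifs with h <;> simp [slice, Finsupp.curry_single, h]

open Classical in
lemma map_slice {N : Type*} [AddCommMonoid N] [Module K N]
    (L : MonoidAlgebra K M →ₗ[K] N) (a : M) (d : (M × M) →₀ K) :
    L (slice a d) =
      d.sum fun p c => if p.1 = a then c • L (MonoidAlgebra.single p.2 1) else 0 := by
  induction d using Finsupp.induction_linear with
  | zero => simp
  | add d d' hd hd' =>
    rw [map_add, map_add, hd, hd', Finsupp.sum_add_index' (by simp)]
    intro p c c'; split_ifs <;> simp [add_smul]
  | single p c =>
    rw [slice_single, Finsupp.sum_single_index (by simp)]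
    split_ifs <;> simp [← map_smul, MonoidAlgebra.smul_single]

end Slice

lemma single_one_mul_single_one {k G : Type*} [Semiring k] [Monoid G] (a b : G) :
    MonoidAlgebra.single a (1 : k) * MonoidAlgebra.single b 1 =
      MonoidAlgebra.single (a * b) 1 := by
  rw [MonoidAlgebra.single_mul_single, one_mul]

section Symmetric

variable {K M N : Type*} [CommSemiring K] [AddCommMonoid N] [Module K N]

lemma supported_le_eqLocus_flip {β : MonoidAlgebra K M →ₗ[K] MonoidAlgebra K M →ₗ[K] N}
    {s : Set M}
    (h : ∀ w ∈ s, ∀ w', β (.single w 1) (.single w' 1) = β (.single w' 1) (.single w 1)) :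
    MonoidAlgebra.supported K K s ≤ LinearMap.eqLocus β β.flip := by
  rw [MonoidAlgebra.supported_eq_span_single, Submodule.span_le]
  rintro _ ⟨w, hw, rfl⟩
  exact MonoidAlgebra.lhom_ext' fun w' => LinearMap.ext_ring (h w hw w')

end Symmetric

section LengthFiltration

variable (K J : Type*) [Semiring K]

noncomputable abbrev lengthFiltration (n : ℕ) : Submodule K (MonoidAlgebra K (FreeMonoid J)) :=
  MonoidAlgebra.supported K K {w | w.length ≤ n}

variable {K J}

lemma single_mem_lengthFiltration {n : ℕ} {w : FreeMonoid J} (hw : w.length ≤ n) :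
    MonoidAlgebra.single w (1 : K) ∈ lengthFiltration K J n :=
  Finsupp.single_mem_supported K 1 hw

lemma single_of_mul_mem_lengthFiltration {n : ℕ} {x : MonoidAlgebra K (FreeMonoid J)}
    (hx : x ∈ lengthFiltration K J n) (i : J) :
    MonoidAlgebra.single (of i) 1 * x ∈ lengthFiltration K J (n + 1) := by
  classical
  intro w hw
  obtain ⟨v, hv, rfl⟩ :=
    Finset.mem_image.mp (MonoidAlgebra.support_coeff_single_mul_subset x 1 _ hw)
  simpa [length_mul, add_comm] using hx hv

end LengthFiltration

section Degree

variable {J : Type*}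

lemma dg_one : dg (1 : FreeMonoid J) = 0 := by simp [dg]

lemma dg_of_mul (i : J) (v : FreeMonoid J) : dg (of i * v) = Finsupp.single i 1 + dg v := by
  simp [dg]

lemma dg_of (j : J) : dg (of j) = Finsupp.single j 1 := by simp [dg]

lemma degree_dg (w : FreeMonoid J) : (dg w).degree = w.length := by
  induction w using FreeMonoid.recOn with
  | one => simp [dg_one]
  | of_mul i v ih => simp [dg_of_mul, ih, length_mul, add_comm]

lemma length_eq_of_dg_eq {w w' : FreeMonoid J} (h : dg w = dg w') : w.length = w'.length := by
  rw [← degree_dg, ← degree_dg, h]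

lemma eq_of_of_dg_eq_single {w : FreeMonoid J} {j : J} (h : dg w = Finsupp.single j 1) :
    w = of j := by
  obtain ⟨i, rfl⟩ := length_eq_one.mp (by rw [← degree_dg, h, Finsupp.degree_single])
  rw [dg_of, Finsupp.single_left_inj one_ne_zero] at h
  rw [h]

lemma of_mul_eq_of_iff {i j : J} {w : FreeMonoid J} : of i * w = of j ↔ i = j ∧ w = 1 := by
  rw [← toList.injective.eq_iff, ← toList.injective.eq_iff (b := 1)]
  simp

lemma pairdeg_zero_right (Bf : J → J → ℤ) (μ : J →₀ ℕ) : pairdeg Bf μ 0 = 0 := by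
  simp [pairdeg]

lemma pairdeg_single_single (Bf : J → J → ℤ) (i j : J) :
    pairdeg Bf (Finsupp.single i 1) (Finsupp.single j 1) = Bf i j := by
  simp [pairdeg]

end Degree

section TwistedProduct

variable {J : Type*} (Bf : J → J → ℤ)

lemma tmulD_single_single (p₁ p₂ : FreeMonoid J × FreeMonoid J) (c₁ c₂ : RatFunc ℚ) :
    tmulD Bf (Finsupp.single p₁ c₁) (Finsupp.single p₂ c₂) =
      Finsupp.single (p₁.1 * p₂.1, p₁.2 * p₂.2)
        (c₁ * c₂ * RatFunc.X ^ pairdeg Bf (dg p₁.2) (dg p₂.1)) := by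
  simp [tmulD]

lemma tmulD_zero_right (d : (FreeMonoid J × FreeMonoid J) →₀ RatFunc ℚ) :
    tmulD Bf d 0 = 0 := by
  simp [tmulD]

lemma tmulD_add_left (d d' e : (FreeMonoid J × FreeMonoid J) →₀ RatFunc ℚ) :
    tmulD Bf (d + d') e = tmulD Bf d e + tmulD Bf d' e := by
  unfold tmulD
  refine Finsupp.sum_add_index' (by simp) fun p c c' => ?_
  rw [← Finsupp.sum_add]
  simp only [add_mul, Finsupp.single_add]

lemma tmulD_add_right (d e e' : (FreeMonoid J × FreeMonoid J) →₀ RatFunc ℚ) :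
    tmulD Bf d (e + e') = tmulD Bf d e + tmulD Bf d e' := by
  unfold tmulD
  rw [← Finsupp.sum_add]
  refine Finsupp.sum_congr fun p _ => Finsupp.sum_add_index' (by simp) fun q c c' => ?_
  simp only [mul_add, add_mul, Finsupp.single_add]

end TwistedProduct

section TwistedProductSlices

variable {J : Type*} (Bf : J → J → ℤ)

lemma slice_one_tmulD_theta (i : J) (d : (FreeMonoid J × FreeMonoid J) →₀ RatFunc ℚ) :
    slice 1 (tmulD Bf (Finsupp.single (of i, 1) 1 + Finsupp.single (1, of i) 1) d) =
      MonoidAlgebra.single (of i) 1 * slice 1 d := by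
  induction d using Finsupp.induction_linear with
  | zero => simp [tmulD_zero_right]
  | add d d' hd hd' => rw [tmulD_add_right, map_add, hd, hd', map_add, mul_add]
  | single p c =>
    rw [tmulD_add_left, tmulD_single_single, tmulD_single_single, map_add, slice_single,
      slice_single, slice_single]
    split_ifs <;> simp_all [MonoidAlgebra.single_mul_single, dg_one, pairdeg_zero_right]

lemma slice_of_tmulD_theta [DecidableEq J] (i j : J)
    (d : (FreeMonoid J × FreeMonoid J) →₀ RatFunc ℚ) :
    slice (of j) (tmulD Bf (Finsupp.single (of i, 1) 1 + Finsupp.single (1, of i) 1) d) =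
      (if i = j then slice 1 d else 0) +
        (RatFunc.X : RatFunc ℚ) ^ Bf i j •
          (MonoidAlgebra.single (of i) 1 * slice (of j) d) := by
  induction d using Finsupp.induction_linear with
  | zero => simp [tmulD_zero_right]
  | add d d' hd hd' =>
    rw [tmulD_add_right, map_add, hd, hd', map_add, map_add, mul_add, smul_add]
    split_ifs <;> abel
  | single p c =>
    rw [tmulD_add_left, tmulD_single_single, tmulD_single_single, map_add, slice_single,
      slice_single, slice_single, slice_single]
    split_ifs <;> simp_all [MonoidAlgebra.single_mul_single, of_mul_eq_of_iff, dg_of, dg_one,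
      pairdeg_zero_right, pairdeg_single_single, mul_comm]

end TwistedProductSlices

section Coproduct

variable {J : Type*}

structure IsTwistedCoproduct (Bf : J → J → ℤ)
    (r : MonoidAlgebra (RatFunc ℚ) (FreeMonoid J) →ₗ[RatFunc ℚ]
      ((FreeMonoid J × FreeMonoid J) →₀ RatFunc ℚ)) : Prop where
  map_one : r 1 = Finsupp.single 1 1
  map_theta : ∀ j : J, r (MonoidAlgebra.single (of j) 1) =
    Finsupp.single (of j, 1) 1 + Finsupp.single (1, of j) 1
  map_mul : ∀ x y, r (x * y) = tmulD Bf (r x) (r y)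

namespace IsTwistedCoproduct

variable {Bf : J → J → ℤ} {r : MonoidAlgebra (RatFunc ℚ) (FreeMonoid J) →ₗ[RatFunc ℚ]
      ((FreeMonoid J × FreeMonoid J) →₀ RatFunc ℚ)}

lemma slice_one_theta_mul (hr : IsTwistedCoproduct Bf r) (i : J)
    (y : MonoidAlgebra (RatFunc ℚ) (FreeMonoid J)) :
    slice 1 (r (MonoidAlgebra.single (of i) 1 * y)) =
      MonoidAlgebra.single (of i) 1 * slice 1 (r y) := by
  rw [hr.map_mul, hr.map_theta, slice_one_tmulD_theta]

lemma slice_of_theta_mul [DecidableEq J] (hr : IsTwistedCoproduct Bf r) (i j : J)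
    (y : MonoidAlgebra (RatFunc ℚ) (FreeMonoid J)) :
    slice (of j) (r (MonoidAlgebra.single (of i) 1 * y)) =
      (if i = j then slice 1 (r y) else 0) +
        (RatFunc.X : RatFunc ℚ) ^ Bf i j •
          (MonoidAlgebra.single (of i) 1 * slice (of j) (r y)) := by
  rw [hr.map_mul, hr.map_theta, slice_of_tmulD_theta]

lemma slice_one_single (hr : IsTwistedCoproduct Bf r) (w : FreeMonoid J) :
    slice 1 (r (MonoidAlgebra.single w 1)) = MonoidAlgebra.single w 1 := by
  induction w using FreeMonoid.recOn with
  | one => simp [← MonoidAlgebra.one_def, hr.map_one, slice_single]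
  | of_mul i v ih =>
    rw [← single_one_mul_single_one, hr.slice_one_theta_mul, ih]

lemma slice_of_single_mem_lengthFiltration [DecidableEq J] (hr : IsTwistedCoproduct Bf r) (j : J)
    (w : FreeMonoid J) :
    slice (of j) (r (MonoidAlgebra.single w 1)) ∈
      lengthFiltration (RatFunc ℚ) J w.length := by
  induction w using FreeMonoid.recOn with
  | one =>
    simp [← MonoidAlgebra.one_def, hr.map_one, slice_single, (of_ne_one j).symm]
  | of_mul i v ih =>
    rw [← single_one_mul_single_one, hr.slice_of_theta_mul,
      hr.slice_one_single, length_mul, length_of, add_comm]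
    refine add_mem ?_ (Submodule.smul_mem _ _ (single_of_mul_mem_lengthFiltration ih i))
    split_ifs
    · exact single_mem_lengthFiltration (Nat.le_succ _)
    · exact zero_mem _

end IsTwistedCoproduct

end Coproduct

section Form

variable {J : Type*} [DecidableEq J]

structure IsLusztigForm (Bf : J → J → ℤ)
    (r : MonoidAlgebra (RatFunc ℚ) (FreeMonoid J) →ₗ[RatFunc ℚ]
      ((FreeMonoid J × FreeMonoid J) →₀ RatFunc ℚ))
    (β : MonoidAlgebra (RatFunc ℚ) (FreeMonoid J) →ₗ[RatFunc ℚ]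
      MonoidAlgebra (RatFunc ℚ) (FreeMonoid J) →ₗ[RatFunc ℚ] RatFunc ℚ) : Prop where
  apply_theta_theta : ∀ i j : J,
    β (MonoidAlgebra.single (of i) 1) (MonoidAlgebra.single (of j) 1) =
      if i = j then (1 - (RatFunc.X : RatFunc ℚ) ^ (Bf i i))⁻¹ else 0
  apply_eq_zero_of_dg_ne : ∀ w w' : FreeMonoid J, dg w ≠ dg w' →
    β (MonoidAlgebra.single w 1) (MonoidAlgebra.single w' 1) = 0
  apply_mul : ∀ x y z, β x (y * z) =
    (r x).sum fun p c => c *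
      (β (MonoidAlgebra.single p.1 1) y * β (MonoidAlgebra.single p.2 1) z)

namespace IsLusztigForm

variable {Bf : J → J → ℤ} {r : MonoidAlgebra (RatFunc ℚ) (FreeMonoid J) →ₗ[RatFunc ℚ]
      ((FreeMonoid J × FreeMonoid J) →₀ RatFunc ℚ)}
  {β : MonoidAlgebra (RatFunc ℚ) (FreeMonoid J) →ₗ[RatFunc ℚ]
      MonoidAlgebra (RatFunc ℚ) (FreeMonoid J) →ₗ[RatFunc ℚ] RatFunc ℚ}

open Classical in
lemma apply_theta (hβ : IsLusztigForm Bf r β) (w : FreeMonoid J) (j : J) :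
    β (MonoidAlgebra.single w 1) (MonoidAlgebra.single (of j) 1) =
      if w = of j then (1 - (RatFunc.X : RatFunc ℚ) ^ (Bf j j))⁻¹ else 0 := by
  split_ifs with h
  · rw [h, hβ.apply_theta_theta, if_pos rfl]
  · exact hβ.apply_eq_zero_of_dg_ne _ _ fun hdg => h (eq_of_of_dg_eq_single (hdg.trans (dg_of j)))

lemma apply_theta_mul (hβ : IsLusztigForm Bf r β)
    (x y : MonoidAlgebra (RatFunc ℚ) (FreeMonoid J)) (j : J) :
    β x (MonoidAlgebra.single (of j) 1 * y) =
      (1 - (RatFunc.X : RatFunc ℚ) ^ (Bf j j))⁻¹ * β (slice (of j) (r x)) y := by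
  rw [hβ.apply_mul, ← β.flip_apply, map_slice, Finsupp.mul_sum]
  refine Finsupp.sum_congr fun p _ => ?_
  rw [hβ.apply_theta]
  split_ifs <;> simp [mul_left_comm]

lemma apply_of_mul_of_mul (hβ : IsLusztigForm Bf r β) (hr : IsTwistedCoproduct Bf r)
    (i j : J) (v u : FreeMonoid J)
    (hu : ∀ y, β (MonoidAlgebra.single u 1) y = β y (MonoidAlgebra.single u 1)) :
    β (MonoidAlgebra.single (of i * v) 1) (MonoidAlgebra.single (of j * u) 1) =
      (1 - (RatFunc.X : RatFunc ℚ) ^ (Bf j j))⁻¹ *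
        ((if i = j then β (MonoidAlgebra.single v 1) (MonoidAlgebra.single u 1) else 0) +
          (RatFunc.X : RatFunc ℚ) ^ Bf i j * ((1 - (RatFunc.X : RatFunc ℚ) ^ (Bf i i))⁻¹ *
            β (slice (of i) (r (MonoidAlgebra.single u 1)))
              (slice (of j) (r (MonoidAlgebra.single v 1))))) := by
  rw [← single_one_mul_single_one, ← single_one_mul_single_one, hβ.apply_theta_mul,
    hr.slice_of_theta_mul, hr.slice_one_single, map_add, map_smul, LinearMap.add_apply,
    LinearMap.smul_apply, ← hu (_ * _), hβ.apply_theta_mul]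
  split_ifs <;> simp

lemma apply_comm_of_length_eq_succ (hβ : IsLusztigForm Bf r β) (hr : IsTwistedCoproduct Bf r)
    (hBf : ∀ i j, Bf i j = Bf j i) {n : ℕ}
    (ih : lengthFiltration (RatFunc ℚ) J n ≤ LinearMap.eqLocus β β.flip)
    {w w' : FreeMonoid J} (hw : w.length = n + 1) :
    β (MonoidAlgebra.single w 1) (MonoidAlgebra.single w' 1) =
      β (MonoidAlgebra.single w' 1) (MonoidAlgebra.single w 1) := by
  by_cases hd : dg w = dg w'
  swap
  · rw [hβ.apply_eq_zero_of_dg_ne _ _ hd, hβ.apply_eq_zero_of_dg_ne _ _ (Ne.symm hd)]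
  have hw' : w'.length = n + 1 := length_eq_of_dg_eq hd ▸ hw
  have comm {x} (hx : x ∈ lengthFiltration (RatFunc ℚ) J n) y :
      β x y = β y x := LinearMap.congr_fun (ih hx) y
  have comm_single {v : FreeMonoid J} (hv : v.length = n) y :
      β (MonoidAlgebra.single v 1) y = β y (MonoidAlgebra.single v 1) :=
    comm (single_mem_lengthFiltration hv.le) y
  cases w using FreeMonoid.casesOn with
  | one => simp at hw
  | of_mul i v =>
  cases w' using FreeMonoid.casesOn with
  | one => simp at hw'
  | of_mul j u =>
  have hv : v.length = n := by simpa [length_mul, add_comm] using hw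
  have hu : u.length = n := by simpa [length_mul, add_comm] using hw'
  have hslice : slice (of j) (r (MonoidAlgebra.single v 1)) ∈
      lengthFiltration (RatFunc ℚ) J n :=
    hv ▸ hr.slice_of_single_mem_lengthFiltration j v
  rw [hβ.apply_of_mul_of_mul hr i j v u (comm_single hu),
    hβ.apply_of_mul_of_mul hr j i u v (comm_single hv), comm_single hv, comm hslice, hBf i j]
  split_ifs with hij hji hji
  · subst hij; ring
  · exact absurd hij.symm hji
  · exact absurd hji.symm hij
  · ring

lemma lengthFiltration_le_eqLocus_flip (hβ : IsLusztigForm Bf r β)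
    (hr : IsTwistedCoproduct Bf r) (hBf : ∀ i j, Bf i j = Bf j i) (n : ℕ) :
    lengthFiltration (RatFunc ℚ) J n ≤ LinearMap.eqLocus β β.flip := by
  induction n with
  | zero =>
    refine supported_le_eqLocus_flip fun w hw w' => ?_
    obtain rfl : w = 1 := length_eq_zero.mp (Nat.le_zero.mp hw)
    by_cases hd : dg 1 = dg w'
    · obtain rfl : w' = 1 := length_eq_zero.mp (length_eq_of_dg_eq hd).symm
      rfl
    · rw [hβ.apply_eq_zero_of_dg_ne _ _ hd, hβ.apply_eq_zero_of_dg_ne _ _ (Ne.symm hd)]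
  | succ n ih =>
    refine supported_le_eqLocus_flip fun w hw w' => ?_
    rcases Nat.lt_succ_iff_lt_or_eq.mp (Nat.lt_succ_of_le hw) with hlt | heq
    · exact LinearMap.congr_fun
        (ih (single_mem_lengthFiltration (Nat.lt_succ_iff.mp hlt))) _
    · exact hβ.apply_comm_of_length_eq_succ hr hBf ih heq

lemma flip_eq (hβ : IsLusztigForm Bf r β) (hr : IsTwistedCoproduct Bf r)
    (hBf : ∀ i j, Bf i j = Bf j i) : β.flip = β := by
  ext w w'
  exact LinearMap.congr_fun
    (hβ.lengthFiltration_le_eqLocus_flip hr hBf w'.length (single_mem_lengthFiltration le_rfl))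
    (MonoidAlgebra.single w 1)

end IsLusztigForm

end Form

theorem stmt_19_general (J : Type*) [DecidableEq J] (Bf : J → J → ℤ)
    (hBf : ∀ i j, Bf i j = Bf j i)
    (r : MonoidAlgebra (RatFunc ℚ) (FreeMonoid J) →ₗ[RatFunc ℚ]
      ((FreeMonoid J × FreeMonoid J) →₀ RatFunc ℚ))
    (hr1 : r 1 = Finsupp.single 1 1)
    (hrθ : ∀ j : J, r (MonoidAlgebra.single (FreeMonoid.of j) 1) =
      Finsupp.single (FreeMonoid.of j, 1) 1 + Finsupp.single (1, FreeMonoid.of j) 1)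
    (hrm : ∀ x y, r (x * y) = tmulD Bf (r x) (r y))
    (β : MonoidAlgebra (RatFunc ℚ) (FreeMonoid J) →ₗ[RatFunc ℚ]
      MonoidAlgebra (RatFunc ℚ) (FreeMonoid J) →ₗ[RatFunc ℚ] RatFunc ℚ)
    (hβθ : ∀ i j : J,
      β (MonoidAlgebra.single (FreeMonoid.of i) 1)
        (MonoidAlgebra.single (FreeMonoid.of j) 1) =
      if i = j then (1 - (RatFunc.X : RatFunc ℚ) ^ (Bf i i))⁻¹ else 0)
    (horth : ∀ w w' : FreeMonoid J, dg w ≠ dg w' →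
      β (MonoidAlgebra.single w 1) (MonoidAlgebra.single w' 1) = 0)
    (hcoprod : ∀ x y z, β x (y * z) =
      (r x).sum fun p c => c *
        (β (MonoidAlgebra.single p.1 1) y * β (MonoidAlgebra.single p.2 1) z)) :
    ∀ x y, β x y = β y x := by
  have hr : IsTwistedCoproduct Bf r := ⟨hr1, hrθ, hrm⟩
  have hβ : IsLusztigForm Bf r β := ⟨hβθ, horth, hcoprod⟩
  exact fun x y => LinearMap.congr_fun₂ (hβ.flip_eq hr hBf) y x

/-- Lusztig's bilinear form on the free algebra `'f` (modelled as the monoid algebra of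
the free monoid on `J` over `ℚ(q)`) — characterised by `⟨1,1⟩ = 1`,
`⟨θ_i, θ_j⟩ = δ_{ij} (1 - q^{i·i})⁻¹`, orthogonality of distinct weight spaces, and
`⟨x, yz⟩ = ⟨r(x), y ⊗ z⟩` for the twisted coproduct `r` — is symmetric. -/
theorem stmt_19 (J : Type*) [DecidableEq J] (Bf : J → J → ℤ)
    (hBf : ∀ i j, Bf i j = Bf j i)
    (r : MonoidAlgebra (RatFunc ℚ) (FreeMonoid J) →ₗ[RatFunc ℚ]
      ((FreeMonoid J × FreeMonoid J) →₀ RatFunc ℚ))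
    (hr1 : r 1 = Finsupp.single 1 1)
    (hrθ : ∀ j : J, r (MonoidAlgebra.single (FreeMonoid.of j) 1) =
      Finsupp.single (FreeMonoid.of j, 1) 1 + Finsupp.single (1, FreeMonoid.of j) 1)
    (hrm : ∀ x y, r (x * y) = tmulD Bf (r x) (r y))
    (β : MonoidAlgebra (RatFunc ℚ) (FreeMonoid J) →ₗ[RatFunc ℚ]
      MonoidAlgebra (RatFunc ℚ) (FreeMonoid J) →ₗ[RatFunc ℚ] RatFunc ℚ)
    (hβ1 : β 1 1 = 1)
    (hβθ : ∀ i j : J,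
      β (MonoidAlgebra.single (FreeMonoid.of i) 1)
        (MonoidAlgebra.single (FreeMonoid.of j) 1) =
      if i = j then (1 - (RatFunc.X : RatFunc ℚ) ^ (Bf i i))⁻¹ else 0)
    (horth : ∀ w w' : FreeMonoid J, dg w ≠ dg w' →
      β (MonoidAlgebra.single w 1) (MonoidAlgebra.single w' 1) = 0)
    (hcoprod : ∀ x y z, β x (y * z) =
      (r x).sum fun p c => c *
        (β (MonoidAlgebra.single p.1 1) y * β (MonoidAlgebra.single p.2 1) z)) :
    ∀ x y, β x y = β y x :=
  stmt_19_general J Bf hBf r hr1 hrθ hrm β hβθ horth hcoprod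
end
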